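/- Let (V, Q) be an FBAS that has at least one quorum, and let T be its top tier. Then T is itself a quorum of (V, Q), and T intersects every quorum of (V, Q). -/

import Mathlib

open Finset

variable {α : Type*} [DecidableEq α]

/-- `U` is a quorum of the FBAS `(V, Q)`: a nonempty subset of `V` containing,
for every member `v`, some slice `q ∈ Q v` with `q ⊆ U`. -/
def IsQuorum (V : Finset α) (Q : α → Finset (Finset α)) (U : Finset α) : Prop :=
  U ⊆ V ∧ U.Nonempty ∧ ∀ v ∈ U, ∃ q ∈ Q v, q ⊆ U

/-- A minimal quorum: a quorum none of whose proper subsets is a quorum. -/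
def IsMinimalQuorum (V : Finset α) (Q : α → Finset (Finset α)) (U : Finset α) : Prop :=
  IsQuorum V Q U ∧ ∀ U' ⊂ U, ¬IsQuorum V Q U'

/-- A blocking set: a subset of `V` intersecting every quorum of `(V, Q)`. -/
def IsBlocking (V : Finset α) (Q : α → Finset (Finset α)) (B : Finset α) : Prop :=
  B ⊆ V ∧ ∀ U, IsQuorum V Q U → (B ∩ U).Nonempty

/-- A minimal blocking set: a blocking set none of whose proper subsets is blocking. -/
def IsMinimalBlocking (V : Finset α) (Q : α → Finset (Finset α)) (B : Finset α) : Prop :=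
  IsBlocking V Q B ∧ ∀ B' ⊂ B, ¬IsBlocking V Q B'

/-- A splitting set: a subset of `V` containing the intersection of two distinct quorums. -/
def IsSplitting (V : Finset α) (Q : α → Finset (Finset α)) (S : Finset α) : Prop :=
  S ⊆ V ∧ ∃ U₁ U₂, IsQuorum V Q U₁ ∧ IsQuorum V Q U₂ ∧ U₁ ≠ U₂ ∧ U₁ ∩ U₂ ⊆ S

/-- A minimal splitting set: a splitting set none of whose proper subsets is splitting. -/
def IsMinimalSplitting (V : Finset α) (Q : α → Finset (Finset α)) (S : Finset α) : Prop :=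
  IsSplitting V Q S ∧ ∀ S' ⊂ S, ¬IsSplitting V Q S'

/-- Well-formedness of an FBAS `(V, Q)`: every slice of every node `v ∈ V`
contains `v` and is a subset of `V`. -/
def WellFormed (V : Finset α) (Q : α → Finset (Finset α)) : Prop :=
  ∀ v ∈ V, ∀ q ∈ Q v, v ∈ q ∧ q ⊆ V

/-- `T` is the top tier of `(V, Q)`: the union of all minimal quorums. -/
def IsTopTier (V : Finset α) (Q : α → Finset (Finset α)) (T : Finset α) : Prop :=
  ∀ v, v ∈ T ↔ ∃ U, IsMinimalQuorum V Q U ∧ v ∈ U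

/-- `(V, Q)` enjoys quorum intersection: any two quorums share a node. -/
def QuorumIntersection (V : Finset α) (Q : α → Finset (Finset α)) : Prop :=
  ∀ U₁ U₂, IsQuorum V Q U₁ → IsQuorum V Q U₂ → (U₁ ∩ U₂).Nonempty

/-!
Every quorum contains a minimal quorum, by strong induction along proper subquorums. Hence the
top tier meets every quorum; being a union of quorums, it is a quorum as soon as it is nonempty,
i.e. as soon as some quorum exists.
-/

section

variable {V : Finset α} {Q : α → Finset (Finset α)}

omit [DecidableEq α] in
theorem IsQuorum.exists_isMinimalQuorum_subset {U : Finset α} (hU : IsQuorum V Q U) :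
    ∃ M, IsMinimalQuorum V Q M ∧ M ⊆ U := by
  induction U using Finset.strongInduction with
  | H U ih =>
    by_cases hmin : ∀ U' ⊂ U, ¬IsQuorum V Q U'
    · exact ⟨U, ⟨hU, hmin⟩, subset_rfl⟩
    · push Not at hmin
      obtain ⟨U', hU'U, hU'⟩ := hmin
      obtain ⟨M, hM, hMU'⟩ := ih U' hU'U hU'
      exact ⟨M, hM, hMU'.trans hU'U.subset⟩

omit [DecidableEq α] in
theorem isQuorum_of_forall_mem_quorum_subset {U : Finset α} (hU : U.Nonempty)
    (h : ∀ v ∈ U, ∃ W, IsQuorum V Q W ∧ v ∈ W ∧ W ⊆ U) : IsQuorum V Q U := by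
  refine ⟨fun v hv => ?_, hU, fun v hv => ?_⟩
  · obtain ⟨W, hW, hvW, -⟩ := h v hv
    exact hW.1 hvW
  · obtain ⟨W, hW, hvW, hWU⟩ := h v hv
    obtain ⟨q, hq, hqW⟩ := hW.2.2 v hvW
    exact ⟨q, hq, hqW.trans hWU⟩

namespace IsTopTier

variable {T : Finset α}

omit [DecidableEq α] in
theorem subset_of_isMinimalQuorum (hT : IsTopTier V Q T) {M : Finset α}
    (hM : IsMinimalQuorum V Q M) : M ⊆ T :=
  fun v hv => (hT v).2 ⟨M, hM, hv⟩

theorem inter_nonempty (hT : IsTopTier V Q T) {U : Finset α} (hU : IsQuorum V Q U) :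
    (T ∩ U).Nonempty := by
  obtain ⟨M, hM, hMU⟩ := hU.exists_isMinimalQuorum_subset
  obtain ⟨v, hvM⟩ := hM.1.2.1
  exact ⟨v, mem_inter.2 ⟨hT.subset_of_isMinimalQuorum hM hvM, hMU hvM⟩⟩

theorem isQuorum (hT : IsTopTier V Q T) (havail : ∃ U, IsQuorum V Q U) : IsQuorum V Q T := by
  obtain ⟨U, hU⟩ := havail
  refine isQuorum_of_forall_mem_quorum_subset ((hT.inter_nonempty hU).mono inter_subset_left) ?_
  intro v hv
  obtain ⟨M, hM, hvM⟩ := (hT v).1 hv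
  exact ⟨M, hM.1, hvM, hT.subset_of_isMinimalQuorum hM⟩

end IsTopTier

end

theorem top_tier_is_quorum_and_intersects_all_general
    (V : Finset α) (Q : α → Finset (Finset α))
    (havail : ∃ U, IsQuorum V Q U)
    (T : Finset α) (hT : IsTopTier V Q T) :
    IsQuorum V Q T ∧ ∀ U, IsQuorum V Q U → (T ∩ U).Nonempty :=
  ⟨hT.isQuorum havail, fun _ => hT.inter_nonempty⟩

/-- in an FBAS with at least one quorum, the top tier is itself a
quorum and intersects every quorum. -/
theorem top_tier_is_quorum_and_intersects_all
    (V : Finset α) (Q : α → Finset (Finset α)) (hwf : WellFormed V Q)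
    (havail : ∃ U, IsQuorum V Q U)
    (T : Finset α) (hT : IsTopTier V Q T) :
    IsQuorum V Q T ∧ ∀ U, IsQuorum V Q U → (T ∩ U).Nonempty :=
  top_tier_is_quorum_and_intersects_all_general V Q havail T hT
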